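/- arXiv:1805.04190 — 4 statements merged into one kernel-verified Lean document; each statement's English description precedes it below -/
import Mathlib

section
/- Let f_i be a real-valued function on a finite set of profiles for a single-parameter agent i whose type takes at most three values L < M < H. If for every pair of profiles x, y with x_i ≠ y_i we have (x_i − y_i)(f_i(y) − f_i(x)) ≥ 0, then every cycle x^0, x^1, ..., x^k = x^0 of profiles has nonnegative total weight, where the weight of step (x^j, x^{j+1}) is x^j_i · (f_i(x^{j+1}) − f_i(x^j)). -/
/-- two-cycle monotonicity implies cycle monotonicity for
single-parameter domains of size at most three. -/
theorem stmt_2 {P : Type*} [Fintype P] (f t : P → ℝ) (L M H : ℝ)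
    (hLM : L < M) (hMH : M < H)
    (hdom : ∀ p : P, t p = L ∨ t p = M ∨ t p = H)
    (h2cm : ∀ x y : P, t x ≠ t y → 0 ≤ (t x - t y) * (f y - f x))
    (k : ℕ) (x : ℕ → P) (hcyc : x k = x 0)
    (hedge : ∀ j < k, t (x j) ≠ t (x (j + 1))) :
    0 ≤ ∑ j ∈ Finset.range k, t (x j) * (f (x (j + 1)) - f (x j)) := by
  have key : ∀ j ∈ Finset.range k,
      M * (f (x (j + 1)) - f (x j)) ≤ t (x j) * (f (x (j + 1)) - f (x j)) := by
    intro j hj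
    rw [Finset.mem_range] at hj
    have hne := hedge j hj
    have h := h2cm (x j) (x (j + 1)) hne
    rcases hdom (x j) with h1 | h1 | h1 <;>
      rcases hdom (x (j + 1)) with h2 | h2 | h2 <;>
      simp only [h1, h2] at h hne ⊢ <;>
      first
        | exact absurd rfl hne
        | nlinarith [h]
  calc (0 : ℝ) = M * ∑ j ∈ Finset.range k, (f (x (j + 1)) - f (x j)) := by
        rw [Finset.sum_range_sub (fun j => f (x j)) k, hcyc]; ring
    _ = ∑ j ∈ Finset.range k, M * (f (x (j + 1)) - f (x j)) := by
        rw [Finset.mul_sum]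
    _ ≤ _ := Finset.sum_le_sum key
end

section
/- Let p, L, H be reals with L < p < H. Suppose f_i(L, b_{−i}) ≥ f_i(H, b'_{−i}) for all i and all b_{−i}, b'_{−i} (strong monotonicity) with f_i taking nonnegative real values. Define utilities u_i(t, (b_i,b_{−i})) = (p − t)·f_i(b_i, b_{−i}). Then for all i, b_{−i}, b'_{−i}: u_i(L,(L,b_{−i})) ≥ u_i(L,(H,b'_{−i})) and u_i(H,(H,b_{−i})) ≥ u_i(H,(L,b'_{−i})). -/
/-- proportional payments with a strongly monotone allocation
yield OSP: every truthful utility dominates every lying utility. -/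
theorem stmt_4 {ι : Type*} {O : ι → Type*} (L H p : ℝ) (hLp : L < p) (hpH : p < H)
    (f : ∀ i : ι, ℝ → O i → ℝ)
    (hpos : ∀ (i : ι) (b : ℝ) (o : O i), 0 ≤ f i b o)
    (hmono : ∀ (i : ι) (o o' : O i), f i H o' ≤ f i L o) :
    ∀ (i : ι) (o o' : O i),
      (p - L) * f i H o' ≤ (p - L) * f i L o ∧
      (p - H) * f i L o' ≤ (p - H) * f i H o := by
  intro i o o'
  constructor
  · exact mul_le_mul_of_nonneg_left (hmono i o o') (by linarith)
  · have := hmono i o' o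
    nlinarith [hpos i H o, hpos i L o']
end

section
/- Let OPT be the greedy algorithm assigning m identical jobs one by one to the machine that would finish them earliest, with ties broken in favor of faster (then lower-index) machines. Then for any two machines i, j with b_i < b_j (or b_i = b_j and i < j): b_i·(OPT_i(b)+1) > b_j·OPT_j(b) and b_j·(OPT_j(b)+1) ≥ b_i·OPT_i(b). -/
/-- balancedness of the greedy assignment of identical jobs
to related machines (ties broken in favor of faster, then lower-index,
machines). -/
theorem stmt_14 (n : ℕ) (b : Fin n → ℝ) (hb : ∀ i, 0 < b i)
    (g : ℕ → Fin n → ℕ) (hg0 : ∀ i, g 0 i = 0)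
    (hstep : ∀ k : ℕ, ∃ istar : Fin n,
      (∀ j : Fin n,
        b istar * ((g k istar : ℝ) + 1) < b j * ((g k j : ℝ) + 1) ∨
        (b istar * ((g k istar : ℝ) + 1) = b j * ((g k j : ℝ) + 1) ∧
          (b istar < b j ∨ (b istar = b j ∧ istar ≤ j)))) ∧
      g (k + 1) = Function.update (g k) istar (g k istar + 1))
    (m : ℕ) :
    ∀ i j : Fin n, (b i < b j ∨ (b i = b j ∧ i < j)) →
      b j * (g m j : ℝ) < b i * ((g m i : ℝ) + 1) ∧
      b i * (g m i : ℝ) ≤ b j * ((g m j : ℝ) + 1) := by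
  induction m with
  | zero =>
    intro i j hij
    simp only [hg0, Nat.cast_zero, mul_zero]
    constructor
    · have hi := hb i; nlinarith
    · have hj := hb j; nlinarith
  | succ k ih =>
    obtain ⟨s, hmin, hupd⟩ := hstep k
    intro i j hij
    have hne : i ≠ j := by
      rcases hij with h | ⟨_, h⟩
      · intro e; rw [e] at h; exact lt_irrefl _ h
      · exact Fin.ne_of_lt h
    have hij' := ih i j hij
    rw [hupd]
    by_cases hi : s = i
    · subst hi
      rw [Function.update_self, Function.update_of_ne (Ne.symm hne)]
      push_cast
      constructor
      · nlinarith [hb s, hij'.1]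
      · rcases hmin j with h | ⟨h, _⟩
        · linarith
        · linarith
    · by_cases hj : s = j
      · subst hj
        rw [Function.update_self, Function.update_of_ne hne]
        push_cast
        constructor
        · rcases hmin i with h | ⟨h, horder⟩
          · linarith
          · exfalso
            rcases hij with h1 | ⟨h1, h2⟩
            · rcases horder with h3 | ⟨h3, _⟩ <;> linarith
            · rcases horder with h3 | ⟨h3, h4⟩
              · linarith
              · exact absurd h4 (not_le.mpr h2)
        · nlinarith [hb s, hij'.2]
      · rw [Function.update_of_ne (fun e => hi e.symm),
          Function.update_of_ne (fun e => hj e.symm)]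
        exact hij'
end

section
/- Let P be selectable but not strongly selectable for subdomain D̃, witnessed by element w ∈ P (P is not selectable for (D̃_{−w}, {max D̃_w})). Then |D̃_w| ≥ 2, and there exists a feasible P' with w ∈ P∖P' such that either H(w) + L(P∖(P'∪{w})) > H(P'∖P) or H(w) + L(P∖(P'∪{w})) = H(P'∖P) with P' ≺ P, where all L, H are with respect to D̃. -/
/-- Lowest possible cost of a set of elements under a domain. -/
noncomputable def Lval {E : Type*} (D : E → Finset ℝ) (S : Finset E) : ℝ :=
  ∑ e ∈ S, sInf (D e : Set ℝ)

/-- Highest possible cost of a set of elements under a domain. -/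
noncomputable def Hval {E : Type*} (D : E → Finset ℝ) (S : Finset E) : ℝ :=
  ∑ e ∈ S, sSup (D e : Set ℝ)

/-- A feasible solution P is selectable for a domain D. -/
def Selectable {E : Type*} [DecidableEq E] (F : Set (Finset E))
    (prec : Finset E → Finset E → Prop)
    (D : E → Finset ℝ) (P : Finset E) : Prop :=
  ∀ P' ∈ F, P' ≠ P →
    Lval D (P \ P') < Hval D (P' \ P) ∨
      (Lval D (P \ P') = Hval D (P' \ P) ∧ prec P P')

/-- if P is selectable but fails selectability when the
domain of its witness w is collapsed to its maximum, then w's domain has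
at least two values and there is a violating feasible P' excluding w. -/
theorem stmt_19 {E : Type*} [DecidableEq E] (F : Set (Finset E))
    (prec : Finset E → Finset E → Prop)
    (htotal : ∀ A B : Finset E, A ≠ B → prec A B ∨ prec B A)
    (D : E → Finset ℝ) (hne : ∀ e, (D e).Nonempty)
    (P : Finset E) (hP : P ∈ F) (w : E) (hw : w ∈ P)
    (hsel : Selectable F prec D P)
    (hnot : ¬ Selectable F prec
      (Function.update D w ({sSup ((D w : Set ℝ))} : Finset ℝ)) P) :
    2 ≤ (D w).card ∧
    ∃ P' ∈ F, P' ≠ P ∧ w ∉ P' ∧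
      (Hval D (P' \ P) < sSup ((D w : Set ℝ)) + Lval D (P \ insert w P') ∨
        (sSup ((D w : Set ℝ)) + Lval D (P \ insert w P') = Hval D (P' \ P) ∧
          prec P' P)) := by
  classical
  set D' := Function.update D w ({sSup ((D w : Set ℝ))} : Finset ℝ) with hD'
  have hcard : 2 ≤ (D w).card := by
    by_contra h
    push_neg at h
    have h1 : (D w).card = 1 := by
      have := Finset.card_pos.mpr (hne w)
      omega
    obtain ⟨a, ha⟩ := Finset.card_eq_one.mp h1
    have hsup : sSup ((D w : Set ℝ)) = a := by
      rw [ha]; simp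
    have : D' = D := by
      rw [hD', hsup, ← ha, Function.update_eq_self]
    rw [this] at hnot
    exact hnot hsel
  refine ⟨hcard, ?_⟩
  simp only [Selectable, not_forall] at hnot
  obtain ⟨P', hP'F, hne', hviol⟩ := hnot
  push_neg at hviol
  obtain ⟨hle, heq⟩ := hviol
  have hwP' : w ∉ P' := by
    intro hwP'
    have h1 : w ∉ P \ P' := by simp [hwP']
    have h2 : w ∉ P' \ P := by simp [hw]
    have eL : Lval D' (P \ P') = Lval D (P \ P') := by
      refine Finset.sum_congr rfl fun e he => ?_
      rw [hD', Function.update_of_ne (fun h => h1 (by rw [← h]; exact he))]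
    have eH : Hval D' (P' \ P) = Hval D (P' \ P) := by
      refine Finset.sum_congr rfl fun e he => ?_
      rw [hD', Function.update_of_ne (fun h => h2 (by rw [← h]; exact he))]
    rcases hsel P' hP'F hne' with hlt | ⟨he, hp⟩
    · exact absurd (eH ▸ eL ▸ hlt) (not_lt.mpr hle)
    · exact heq (eL.trans he |>.trans eH.symm) hp
  -- now compute Lval D' (P \ P')
  have hwmem : w ∈ P \ P' := Finset.mem_sdiff.mpr ⟨hw, hwP'⟩
  have herase : (P \ P').erase w = P \ insert w P' := by
    ext e
    simp only [Finset.mem_erase, Finset.mem_sdiff, Finset.mem_insert]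
    tauto
  have eL : Lval D' (P \ P') = sSup ((D w : Set ℝ)) + Lval D (P \ insert w P') := by
    rw [Lval, ← Finset.add_sum_erase _ _ hwmem, herase]
    congr 1
    · rw [hD', Function.update_self]; simp
    · refine Finset.sum_congr rfl fun e he => ?_
      have : e ≠ w := by
        rcases Finset.mem_sdiff.mp he with ⟨_, h⟩
        exact fun h' => h (h' ▸ Finset.mem_insert_self w P')
      rw [hD', Function.update_of_ne this]
  have eH : Hval D' (P' \ P) = Hval D (P' \ P) := by
    refine Finset.sum_congr rfl fun e he => ?_
    have : e ≠ w := fun h' => hwP' (Finset.mem_sdiff.mp (h' ▸ he)).1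
    rw [hD', Function.update_of_ne this]
  rw [eL] at hle heq
  rw [eH] at hle heq
  refine ⟨P', hP'F, hne', hwP', ?_⟩
  rcases lt_or_eq_of_le hle with hlt | he
  · exact Or.inl hlt
  · exact Or.inr ⟨he.symm, (htotal P' P hne').resolve_right (heq he.symm)⟩
end
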